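/- Let T be a commutative ring, let R be a T-algebra whose underlying ring is a principal left ideal domain (a nontrivial ring without zero divisors in which every left ideal is generated by a single element), let n ≥ 1, and let K = M(n,R) be the full n×n matrix algebra over R. Then every T-algebra automorphism φ of K is a product of an inner automorphism and a ring automorphism: there exist an invertible matrix u ∈ K and a T-algebra automorphism α of R such that φ(A) = u · ᾱ(A) · u⁻¹ for all A ∈ K, where ᾱ(A) is obtained by applying α to every entry of A. -/

import Mathlib

/-!
The images `f i j = φ (single i j 1)` form a full set of matrix units. Right multiplication
by `f i i₀` and `f i₀ i` identifies the row space `R^n` with `W^n`, where `W` is the row space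
of the idempotent `f i₀ i₀`. Over a principal left ideal domain `W ⊆ R^n` is free, and the
invariance of rank (`R` is left Noetherian) forces `W ≅ R`; hence `f i₀ i₀ = c wᵀ` has rank
one. The matrix `Q` with columns `f i i₀ c` and the matrix `P` with rows `w f i₀ j` satisfy
`Q (single i j 1) P = f i j` and `Q P = 1`, so `P Q = 1` because matrix rings over a left
Noetherian ring are Dedekind-finite. Conjugating `φ` by `Q` gives an automorphism fixing every
`single i j 1`. It preserves the scalar matrices, which form the centralizer of the matrix
units, acts on them by an automorphism `α` of `R`, and is then `α` applied entrywise.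
-/

open Matrix

section PrincipalIdealDomain

open Module LinearMap

variable {R : Type*} [Ring R] [IsDomain R] [IsPrincipalIdealRing R]

theorem Ideal.free_of_isPrincipalIdealRing (I : Ideal R) : Module.Free R I := by
  obtain ⟨a, rfl⟩ := (IsPrincipalIdealRing.principal I).principal
  by_cases ha : a = 0
  · subst ha
    rw [Submodule.span_zero_singleton]
    infer_instance
  · exact .of_equiv (LinearEquiv.toSpanNonzeroSingleton R R a ha)

/-- The last coordinate maps `M` onto a left ideal, which is free, so `M` splits as the product
of that ideal with the kernel, and the kernel embeds into `Fin n → R`. -/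
theorem Module.free_of_injective_pi {n : ℕ} {M : Type*} [AddCommGroup M] [Module R M]
    {f : M →ₗ[R] Fin n → R} (hf : Function.Injective f) : Module.Free R M := by
  induction n generalizing M with
  | zero =>
    have : Subsingleton M := hf.subsingleton
    infer_instance
  | succ n ih =>
    let last : M →ₗ[R] R := proj (Fin.last n) ∘ₗ f
    set π : M →ₗ[R] range last := last.rangeRestrict
    have : Module.Free R (ker π) := by
      refine ih (f := funLeft R R Fin.castSucc ∘ₗ f ∘ₗ (ker π).subtype) fun x y hxy ↦ ?_
      have hlast (z : ker π) : f z (Fin.last n) = 0 := by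
        simpa [π, last, Subtype.ext_iff] using z.2
      refine Subtype.ext (hf ?_)
      rw [← Fin.snoc_init_self (f x), ← Fin.snoc_init_self (f y), hlast, hlast]
      exact congrArg (Fin.snoc · 0) hxy
    have : Module.Free R (range last) := Ideal.free_of_isPrincipalIdealRing _
    obtain ⟨s, hs⟩ := π.exists_rightInverse_of_surjective (range_rangeRestrict _)
    exact .of_equiv ((exact_subtype_ker_map π).splitSurjectiveEquiv (ker π).injective_subtype
      ⟨s, hs⟩).1.symm

end PrincipalIdealDomain

theorem Module.finrank_eq_one_of_linearEquiv_pi {R W ι : Type*} [Ring R] [StrongRankCondition R]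
    [AddCommGroup W] [Module R W] [Module.Free R W] [Module.Finite R W] [Fintype ι] [Nonempty ι]
    (e : (ι → R) ≃ₗ[R] (ι → W)) : Module.finrank R W = 1 := by
  have h := e.finrank_eq
  rw [Module.finrank_pi, Module.finrank_pi_fintype, Finset.sum_const, Finset.card_univ,
    smul_eq_mul] at h
  exact Nat.eq_of_mul_eq_mul_left Fintype.card_pos (h.symm.trans (mul_one _).symm)

section SingleOne

variable {R m : Type*} [Semiring R] [Fintype m] [DecidableEq m]

theorem Matrix.single_one_mul_single_one (i j k l : m) :
    single i j (1 : R) * single k l 1 = if j = k then single i l 1 else 0 := by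
  split_ifs with h
  · rw [h, single_mul_single_same, mul_one]
  · exact single_mul_single_of_ne _ _ _ _ h _

theorem Matrix.mul_single_one_mul (Q P : Matrix m m R) (i j : m) :
    Q * single i j 1 * P = vecMulVec (Q.col i) (P.row j) := by
  rw [single_eq_single_vecMulVec_single, mul_vecMulVec, vecMulVec_mul, mulVec_single_one,
    single_one_vecMul]

theorem Matrix.scalar_mul_single_one (r : R) (i j : m) :
    scalar m r * single i j 1 = single i j r := by
  simp [scalar_apply, ← smul_eq_diagonal_mul, smul_single]

end SingleOne

structure IsMatrixUnits {A ι : Type*} [Semiring A] [Fintype ι] [DecidableEq ι]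
    (f : ι → ι → A) : Prop where
  mul_eq : ∀ i j k l, f i j * f k l = if j = k then f i l else 0
  sum_diag : ∑ i, f i i = 1

theorem Matrix.isMatrixUnits_single_one {R m : Type*} [Semiring R] [Fintype m] [DecidableEq m] :
    IsMatrixUnits fun i j : m ↦ single i j (1 : R) :=
  ⟨single_one_mul_single_one, sum_single_one⟩

namespace IsMatrixUnits

theorem map {A B F ι : Type*} [Semiring A] [Semiring B] [FunLike F A B] [RingHomClass F A B]
    [Fintype ι] [DecidableEq ι] {f : ι → ι → A} (hf : IsMatrixUnits f) (φ : F) :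
    IsMatrixUnits fun i j ↦ φ (f i j) where
  mul_eq i j k l := by rw [← map_mul, hf.mul_eq, apply_ite φ, map_zero]
  sum_diag := by rw [← map_sum, hf.sum_diag, map_one]

section Semiring

variable {R m : Type*} [Semiring R] [Fintype m] [DecidableEq m] {f : m → m → Matrix m m R}

theorem nonempty_linearEquiv_pi_range_toLinearMapRight' (hf : IsMatrixUnits f) (i₀ : m) :
    Nonempty ((m → R) ≃ₗ[R] (m → LinearMap.range (f i₀ i₀).toLinearMapRight')) := by
  set W := LinearMap.range (f i₀ i₀).toLinearMapRight'
  have hmem (i : m) (v : m → R) : v ᵥ* f i i₀ ∈ W :=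
    ⟨v ᵥ* f i i₀, by simp [vecMul_vecMul, hf.mul_eq]⟩
  have hW (x : W) : (x : m → R) ᵥ* f i₀ i₀ = x := by
    obtain ⟨v, hv⟩ := x.2
    rw [← hv, toLinearMapRight'_apply, vecMul_vecMul, hf.mul_eq, if_pos rfl]
  let F : (m → R) →ₗ[R] (m → W) :=
    LinearMap.pi fun i ↦ (f i i₀).toLinearMapRight'.codRestrict W (hmem i)
  let G : (m → W) →ₗ[R] (m → R) :=
    ∑ i, (f i₀ i).toLinearMapRight' ∘ₗ W.subtype ∘ₗ LinearMap.proj i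
  have hG (x : m → W) : G x = ∑ i, (x i : m → R) ᵥ* f i₀ i := by simp [G]
  refine ⟨.ofLinearMap (f := F) (g := G) (LinearMap.ext fun x ↦ funext fun i ↦ Subtype.ext ?_)
    (LinearMap.ext fun v ↦ ?_)⟩
  · calc G x ᵥ* f i i₀ = ∑ j, (x j : m → R) ᵥ* (f i₀ j * f i i₀) := by
          simp [hG, sum_vecMul, vecMul_vecMul]
      _ = x i ᵥ* f i₀ i₀ := by simp [hf.mul_eq, apply_ite]
      _ = x i := hW _
  · calc G (F v) = ∑ i, v ᵥ* (f i i₀ * f i₀ i) := by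
          simp_rw [hG, ← vecMul_vecMul]; rfl
      _ = v ᵥ* ∑ i, f i i := by simp [hf.mul_eq, vecMul_sum]
      _ = v := by rw [hf.sum_diag, vecMul_one]

theorem exists_units_eq_conj_single_of_eq_vecMulVec [IsDedekindFiniteMonoid (Matrix m m R)]
    (hf : IsMatrixUnits f) {i₀ : m} {c w : m → R} (hcw : f i₀ i₀ = vecMulVec c w) :
    ∃ u : (Matrix m m R)ˣ, ∀ i j, f i j = u.val * single i j 1 * u⁻¹.val := by
  set Q : Matrix m m R := (of fun i ↦ f i i₀ *ᵥ c)ᵀ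
  set P : Matrix m m R := of fun j ↦ w ᵥ* f i₀ j
  have hQP (i j : m) : Q * single i j 1 * P = f i j := by
    rw [mul_single_one_mul]
    calc vecMulVec (Q.col i) (P.row j) = f i i₀ * vecMulVec c w * f i₀ j := by
          rw [mul_vecMulVec, vecMulVec_mul]; rfl
      _ = f i j := by rw [← hcw, hf.mul_eq, if_pos rfl, hf.mul_eq, if_pos rfl]
  have hQP_one : Q * P = 1 := by
    rw [← hf.sum_diag, ← Finset.sum_congr rfl fun i _ ↦ hQP i i, ← Finset.sum_mul,
      ← Finset.mul_sum, sum_single_one, mul_one]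
  exact ⟨.mkOfMulEqOne Q P hQP_one, fun i j ↦ (hQP i j).symm⟩

end Semiring

theorem exists_eq_vecMulVec {R m : Type*} [Ring R] [IsDomain R] [IsPrincipalIdealRing R]
    [Fintype m] [DecidableEq m] {f : m → m → Matrix m m R} (hf : IsMatrixUnits f) (i₀ : m) :
    ∃ c w : m → R, f i₀ i₀ = vecMulVec c w := by
  set W := LinearMap.range (f i₀ i₀).toLinearMapRight'
  obtain ⟨e⟩ := hf.nonempty_linearEquiv_pi_range_toLinearMapRight' i₀
  let e₀ := LinearEquiv.funCongrLeft R R (Fintype.equivFin m).symm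
  have : Module.Free R W :=
    Module.free_of_injective_pi (f := e₀.toLinearMap ∘ₗ W.subtype)
      (e₀.injective.comp W.injective_subtype)
  have : Nonempty m := ⟨i₀⟩
  let b := Module.finBasisOfFinrankEq R W (Module.finrank_eq_one_of_linearEquiv_pi e)
  have hrow (a : m) : f i₀ i₀ a ∈ W := ⟨Pi.single a 1, by simp; rfl⟩
  refine ⟨fun a ↦ b.repr ⟨_, hrow a⟩ 0, b 0, ?_⟩
  ext a j
  have := congrArg (fun x : W ↦ (x : m → R) j) (b.sum_repr ⟨_, hrow a⟩)
  simpa [vecMulVec_apply] using this.symm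

end IsMatrixUnits

section FixingMatrixUnits

variable {T R m : Type*} [CommSemiring T] [Semiring R] [Algebra T R] [Fintype m] [DecidableEq m]

theorem AlgHom.map_scalar_mem_range_scalar (ψ : Matrix m m R →ₐ[T] Matrix m m R)
    (hψ : ∀ i j, ψ (single i j 1) = single i j 1) (r : R) :
    ψ (scalar m r) ∈ Set.range (scalar m) :=
  mem_range_scalar_iff_commute_single'.mpr fun i j ↦
    hψ i j ▸ ((scalar_commute_iff.mpr (by simp [smul_single])).symm.map ψ)

variable [Nonempty m]

theorem AlgHom.exists_eq_map_of_map_single_one (ψ : Matrix m m R →ₐ[T] Matrix m m R)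
    (hψ : ∀ i j, ψ (single i j 1) = single i j 1) :
    ∃ α : R →ₐ[T] R, ∀ A, ψ A = A.map α := by
  choose a ha using ψ.map_scalar_mem_range_scalar hψ
  have halgebraMap (t : T) : scalar m (algebraMap T R t) = algebraMap T (Matrix m m R) t := by
    ext i j
    simp [algebraMap_matrix_apply, scalar_apply, diagonal_apply]
  have ha_one : a 1 = 1 := (scalar_inj (n := m)).mp <| by simp only [ha, map_one]
  have ha_mul (r s : R) : a (r * s) = a r * a s :=
    (scalar_inj (n := m)).mp <| by simp only [ha, map_mul]
  have ha_zero : a 0 = 0 := (scalar_inj (n := m)).mp <| by simp only [ha, map_zero]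
  have ha_add (r s : R) : a (r + s) = a r + a s :=
    (scalar_inj (n := m)).mp <| by simp only [ha, map_add]
  have ha_algebraMap (t : T) : a (algebraMap T R t) = algebraMap T R t :=
    (scalar_inj (n := m)).mp <| by rw [ha, halgebraMap, AlgHom.commutes]
  let α : R →ₐ[T] R :=
    { toFun := a, map_one' := ha_one, map_mul' := ha_mul, map_zero' := ha_zero,
      map_add' := ha_add, commutes' := ha_algebraMap }
  have hsingle (i j : m) (r : R) : ψ (single i j r) = single i j (α r) := by
    rw [← scalar_mul_single_one, map_mul, hψ, ← ha, scalar_mul_single_one]; rfl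
  refine ⟨α, fun A ↦ ?_⟩
  conv_lhs => rw [matrix_eq_sum_single A]
  conv_rhs => rw [matrix_eq_sum_single (A.map α)]
  simp [map_sum, hsingle]

theorem AlgEquiv.exists_eq_map_of_map_single_one (ψ : Matrix m m R ≃ₐ[T] Matrix m m R)
    (hψ : ∀ i j, ψ (single i j 1) = single i j 1) :
    ∃ α : R ≃ₐ[T] R, ∀ A, ψ A = A.map α := by
  obtain ⟨α, hα⟩ := ψ.toAlgHom.exists_eq_map_of_map_single_one hψ
  obtain ⟨β, hβ⟩ := ψ.symm.toAlgHom.exists_eq_map_of_map_single_one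
    fun i j ↦ ψ.symm_apply_eq.mpr (hψ i j).symm
  obtain ⟨i₀⟩ := ‹Nonempty m›
  have hαβ (r : R) : α (β r) = r := by
    simpa using congr_fun₂ ((hα _).symm.trans (congrArg ψ (hβ (scalar m r))).symm) i₀ i₀
  have hβα (r : R) : β (α r) = r := by
    simpa using
      congr_fun₂ ((hβ _).symm.trans (congrArg ψ.symm (hα (scalar m r))).symm) i₀ i₀
  exact ⟨.ofAlgHom α β (AlgHom.ext hαβ) (AlgHom.ext hβα), hα⟩

end FixingMatrixUnits

/-- If `R` is a `T`-algebra whose underlying ring is a principal left ideal domain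
(a nontrivial ring without zero divisors in which every left ideal is principal), every
`T`-algebra automorphism of the full matrix algebra `M(n,R)` is a product of an inner
automorphism and a ring automorphism. -/
theorem stmt16 (T R : Type*) [CommRing T] [Ring R] [Algebra T R] [Nontrivial R]
    [NoZeroDivisors R] (hpli : ∀ I : Ideal R, Submodule.IsPrincipal I)
    (n : ℕ) (hn : 1 ≤ n)
    (φ : Matrix (Fin n) (Fin n) R ≃ₐ[T] Matrix (Fin n) (Fin n) R) :
    ∃ (u : (Matrix (Fin n) (Fin n) R)ˣ) (α : R ≃ₐ[T] R),
      ∀ A : Matrix (Fin n) (Fin n) R, φ A = Units.val u * A.map ⇑α * Units.val u⁻¹ := by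
  have : IsPrincipalIdealRing R := ⟨hpli⟩
  have : IsDomain R := NoZeroDivisors.to_isDomain R
  have : Nonempty (Fin n) := ⟨⟨0, hn⟩⟩
  have hf := isMatrixUnits_single_one.map φ
  obtain ⟨c, w, hcw⟩ := hf.exists_eq_vecMulVec (Classical.arbitrary _)
  obtain ⟨u, hu⟩ := hf.exists_units_eq_conj_single_of_eq_vecMulVec hcw
  let ψ := φ.trans (MulSemiringAction.toAlgEquiv T _ (ConjAct.toConjAct u⁻¹))
  obtain ⟨α, hα⟩ := ψ.exists_eq_map_of_map_single_one fun i j ↦ by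
    simp [ψ, hu, ConjAct.units_smul_def, mul_assoc]
  refine ⟨u, α, fun A ↦ ?_⟩
  rw [← hα]
  simp [ψ, ConjAct.units_smul_def, ← mul_assoc]
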